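/- arXiv:1511.06525 — 3 statements merged into one kernel-verified Lean document; each statement's English description precedes it below -/
import Mathlib

section
/- In the block model with treatments 0,1,…,n (placebo and n ≥ 2 doses) and t cohorts, for EVERY design ξ (any nonnegative weights summing to 1, no dose-escalation constraints), the smallest eigenvalue of the information matrix for comparing the doses with the placebo satisfies λ_min(N_A(ξ)) ≤ 1/(4n). -/
/-!
Test the Rayleigh quotient on the normalised all-ones vector `n^{-1/2} 𝟙`: it equals `1/n` times
the sum of all entries of `N_A(ξ)`. Writing `a_k` for the total dose weight and `b_k` for the
placebo weight of cohort `k`, that sum is `∑ₖ (a_k - a_k² / s_k) = ∑ₖ a_k b_k / s_k`, and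
`a_k b_k / s_k ≤ s_k / 4` by AM-GM since `s_k = a_k + b_k`. Summing gives at most `1/4`.
-/

noncomputable section

open Matrix Finset

/-- An approximate design on treatments 0,…,n and cohorts 1,…,t:
nonnegative weights summing to 1. -/
def isDesign (n t : ℕ) (ξ : Fin (n+1) → Fin t → ℝ) : Prop :=
  (∀ i k, 0 ≤ ξ i k) ∧ ∑ i, ∑ k, ξ i k = 1

/-- Treatment proportions r_i(ξ). -/
def repl (n t : ℕ) (ξ : Fin (n+1) → Fin t → ℝ) (i : Fin (n+1)) : ℝ := ∑ k, ξ i k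

/-- Cohort proportions s_k(ξ). -/
def coh (n t : ℕ) (ξ : Fin (n+1) → Fin t → ℝ) (k : Fin t) : ℝ := ∑ i, ξ i k

/-- The information matrix N_A(ξ) for comparing the doses with the placebo. -/
def NAgen (n t : ℕ) (ξ : Fin (n+1) → Fin t → ℝ) : Matrix (Fin n) (Fin n) ℝ :=
  fun i j => (if i = j then repl n t ξ i.succ else 0) -
    ∑ k, (if 0 < coh n t ξ k then (coh n t ξ k)⁻¹ else 0) * (ξ i.succ k * ξ j.succ k)

/-- Smallest eigenvalue of a real symmetric matrix, via the Rayleigh quotient. -/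
def lambdaMin {m : ℕ} (A : Matrix (Fin m) (Fin m) ℝ) : ℝ :=
  sInf { r : ℝ | ∃ x : Fin m → ℝ, ∑ i, x i ^ 2 = 1 ∧ r = ∑ i, ∑ j, x i * A i j * x j }

section Rayleigh

variable {m : ℕ} (A : Matrix (Fin m) (Fin m) ℝ)

theorem neg_sum_abs_le_rayleigh {x : Fin m → ℝ} (hx : ∑ i, x i ^ 2 = 1) :
    -∑ i, ∑ j, |A i j| ≤ ∑ i, ∑ j, x i * A i j * x j := by
  have hx_le : ∀ i, |x i| ≤ 1 := fun i => by
    have : x i ^ 2 ≤ 1 := hx ▸ single_le_sum (fun j _ => sq_nonneg (x j)) (mem_univ i)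
    exact (sq_le_one_iff_abs_le_one _).mp this
  rw [← sum_neg_distrib]
  refine sum_le_sum fun i _ => ?_
  rw [← sum_neg_distrib]
  refine sum_le_sum fun j _ => ?_
  have : |x i * A i j * x j| ≤ |A i j| := by
    rw [abs_mul, abs_mul]
    calc |x i| * |A i j| * |x j| ≤ 1 * |A i j| * 1 := by gcongr <;> exact hx_le _
      _ = |A i j| := by ring
  linarith [neg_abs_le (x i * A i j * x j)]

theorem lambdaMin_le_rayleigh {x : Fin m → ℝ} (hx : ∑ i, x i ^ 2 = 1) :
    lambdaMin A ≤ ∑ i, ∑ j, x i * A i j * x j :=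
  csInf_le ⟨-∑ i, ∑ j, |A i j|, by rintro r ⟨y, hy, rfl⟩; exact neg_sum_abs_le_rayleigh A hy⟩
    ⟨x, hx, rfl⟩

theorem lambdaMin_le_sum_entries_div (hm : 0 < m) :
    lambdaMin A ≤ (∑ i, ∑ j, A i j) / m := by
  have hm' : (0 : ℝ) < m := Nat.cast_pos.mpr hm
  set c := (Real.sqrt m)⁻¹
  have hc : c ^ 2 = (m : ℝ)⁻¹ := by rw [inv_pow, Real.sq_sqrt hm'.le]
  have hx : ∑ _i : Fin m, c ^ 2 = 1 := by
    rw [sum_const, card_fin, nsmul_eq_mul, hc, mul_inv_cancel₀ hm'.ne']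
  calc lambdaMin A ≤ ∑ i, ∑ j, c * A i j * c := lambdaMin_le_rayleigh A hx
    _ = (∑ i, ∑ j, A i j) / m := by
      simp only [fun i j => show c * A i j * c = c ^ 2 * A i j by ring, ← mul_sum, hc]
      rw [inv_mul_eq_div]

end Rayleigh

theorem sub_ite_inv_mul_sq_le_quarter {a b : ℝ} (hb : 0 ≤ b) :
    a - (if 0 < b + a then (b + a)⁻¹ else 0) * (a * a) ≤ (b + a) / 4 := by
  split_ifs with hs
  · have key : a - (b + a)⁻¹ * (a * a) = a * b / (b + a) := by field_simp; ring
    rw [key, div_le_div_iff₀ hs four_pos]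
    nlinarith [sq_nonneg (a - b)]
  · linarith

section Design

variable {n t : ℕ} (ξ : Fin (n+1) → Fin t → ℝ)

theorem coh_eq_placebo_add_doses (k : Fin t) :
    coh n t ξ k = ξ 0 k + ∑ i : Fin n, ξ i.succ k :=
  Fin.sum_univ_succ _

theorem sum_coh (hξ : isDesign n t ξ) : ∑ k, coh n t ξ k = 1 := by
  rw [← hξ.2]
  exact Finset.sum_comm

theorem sum_entries_NAgen :
    ∑ i, ∑ j, NAgen n t ξ i j = ∑ k, ((∑ i : Fin n, ξ i.succ k) -
      (if 0 < coh n t ξ k then (coh n t ξ k)⁻¹ else 0) *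
        ((∑ i : Fin n, ξ i.succ k) * (∑ i : Fin n, ξ i.succ k))) := by
  simp only [NAgen, repl, sum_sub_distrib, sum_ite_eq, mem_univ, if_true, mul_sum, sum_mul]
  congr 1
  · exact Finset.sum_comm
  · exact (sum_congr rfl fun _ _ => Finset.sum_comm).trans
      (Finset.sum_comm.trans (sum_congr rfl fun _ _ => Finset.sum_comm))

theorem sum_entries_NAgen_le_quarter (hξ : isDesign n t ξ) :
    ∑ i, ∑ j, NAgen n t ξ i j ≤ 1 / 4 := by
  rw [sum_entries_NAgen, ← sum_coh ξ hξ, sum_div]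
  refine sum_le_sum fun k _ => ?_
  rw [coh_eq_placebo_add_doses]
  exact sub_ite_inv_mul_sq_le_quarter (hξ.1 _ _)

end Design

theorem stmt1_general (n t : ℕ) (hn : 2 ≤ n)
    (ξ : Fin (n+1) → Fin t → ℝ) (hξ : isDesign n t ξ) :
    lambdaMin (NAgen n t ξ) ≤ 1 / (4 * n) := by
  calc lambdaMin (NAgen n t ξ) ≤ (∑ i, ∑ j, NAgen n t ξ i j) / n :=
        lambdaMin_le_sum_entries_div _ (by omega)
    _ ≤ (1 / 4) / n := by gcongr; exact sum_entries_NAgen_le_quarter ξ hξ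
    _ = 1 / (4 * n) := by rw [div_div]

/-- For every design (no dose-escalation constraints), λ_min(N_A(ξ)) ≤ 1/(4n). -/
theorem stmt1 (n t : ℕ) (hn : 2 ≤ n) (ht : 1 ≤ t)
    (ξ : Fin (n+1) → Fin t → ℝ) (hξ : isDesign n t ξ) :
    lambdaMin (NAgen n t ξ) ≤ 1 / (4 * n) :=
  stmt1_general n t hn ξ hξ
end
end

section
/- For every extended dose-escalation design ξ (t = n+1), λ_min(N_A(ξ)) ≤ 1/(4n), and λ_min(N_A(ξ)) = 1/(4n) holds if and only if ξ(0,k) = 1/(2(n+1)) for every cohort k = 1,…,n+1 and r_1(ξ) = r_2(ξ) = … = r_n(ξ) = 1/(2n). Consequently, an extended design is E-optimal for comparing the drug doses with the placebo if and only if it satisfies these linear conditions. -/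
/-!
Let `s_k` be the total dose weight in cohort `k` and `Q` the quadratic form of `N_A`. At the
all-ones vector, `Q 1 = ∑ₖ (s_k - t s_k²) = 1/4 - t ∑ₖ (s_k - 1/(2t))²`, so
`λ_min · n ≤ Q 1 ≤ 1/4`, with equality forcing `s_k = 1/(2t)` for every cohort. Then `1` minimises
the Rayleigh quotient, hence is an eigenvector for `λ_min`, and `(N_A 1)_i = r_i / 2` gives
`r_i = 1/(2n)`. Conversely, under these conditions Cauchy–Schwarz within each cohort gives
`t ∑ₖ (∑ᵢ xᵢ ξ(i,k))² ≤ ½ ∑ᵢ rᵢ xᵢ²`, so `Q x ≥ |x|²/(4n)`. For extended designs the cohort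
totals `1/t` turn `s_k = 1/(2t)` into `ξ(0,k) = 1/(2t)`, and an explicit extended design meeting
the conditions attains the bound, which characterises E-optimality.
-/

noncomputable section

open Matrix Finset

/-- A dose-escalation design: (i) in cohort k ≤ n only treatments 0,…,k are
allowed (cohort `k : Fin t` has cohort number k+1, treatment `i : Fin (n+1)`
has treatment number i); (ii) each cohort has proportion 1/t. -/
def isEscalation (n t : ℕ) (ξ : Fin (n+1) → Fin t → ℝ) : Prop :=
  isDesign n t ξ ∧
  (∀ (i : Fin (n+1)) (k : Fin t), k.val + 1 ≤ n → k.val + 1 < i.val → ξ i k = 0) ∧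
  (∀ k : Fin t, ∑ i, ξ i k = 1 / t)

/-- The information matrix N_A(ξ) = diag(r_1,…,r_n) − t·Z Z^T for comparing
the doses with the placebo. -/
def NA (n t : ℕ) (ξ : Fin (n+1) → Fin t → ℝ) : Matrix (Fin n) (Fin n) ℝ :=
  fun i j => (if i = j then repl n t ξ i.succ else 0) -
    (t : ℝ) * ∑ k, ξ i.succ k * ξ j.succ k

/-- The Senn design (t = n): in each cohort half the weight on placebo and half
on the highest allowed dose. -/
def senn (n : ℕ) : Fin (n+1) → Fin n → ℝ :=
  fun i k => if i.val = 0 ∨ i.val = k.val + 1 then 1 / (2 * n) else 0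

section Rayleigh

variable {m : ℕ} (A : Matrix (Fin m) (Fin m) ℝ)

lemma sum_sum_mul_mul_eq_dotProduct_mulVec (x : Fin m → ℝ) :
    ∑ i, ∑ j, x i * A i j * x j = x ⬝ᵥ A *ᵥ x := by
  simp only [dotProduct, mulVec, mul_sum, mul_assoc]

lemma bddBelow_rayleigh :
    BddBelow { r : ℝ | ∃ x : Fin m → ℝ, ∑ i, x i ^ 2 = 1 ∧ r = ∑ i, ∑ j, x i * A i j * x j } := by
  have hS : IsCompact {x : Fin m → ℝ | ∑ i, x i ^ 2 = 1} := by
    refine Metric.isCompact_of_isClosed_isBounded (isClosed_eq (by fun_prop) continuous_const) ?_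
    refine (Metric.isBounded_closedBall (x := 0) (r := 1)).subset fun x hx => ?_
    refine mem_closedBall_zero_iff.mpr ((pi_norm_le_iff_of_nonneg zero_le_one).mpr fun i => ?_)
    rw [Real.norm_eq_abs, ← sq_le_one_iff_abs_le_one, ← hx]
    exact single_le_sum (fun j _ => sq_nonneg (x j)) (mem_univ i)
  refine (hS.bddBelow_image (f := fun x => ∑ i, ∑ j, x i * A i j * x j) (by fun_prop)).mono ?_
  rintro r ⟨x, hx, rfl⟩
  exact ⟨x, hx, rfl⟩

lemma lambdaMin_le_dotProduct_mulVec {x : Fin m → ℝ} (hx : ∑ i, x i ^ 2 = 1) :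
    lambdaMin A ≤ x ⬝ᵥ A *ᵥ x :=
  csInf_le (bddBelow_rayleigh A) ⟨x, hx, (sum_sum_mul_mul_eq_dotProduct_mulVec A x).symm⟩

lemma lambdaMin_mul_sum_sq_le (x : Fin m → ℝ) :
    lambdaMin A * ∑ i, x i ^ 2 ≤ x ⬝ᵥ A *ᵥ x := by
  rcases (sum_nonneg fun i _ => sq_nonneg (x i) : 0 ≤ ∑ i, x i ^ 2).eq_or_lt with hN | hN
  · have hx : x = 0 := funext fun i => by
      simpa using (sum_eq_zero_iff_of_nonneg fun j _ => sq_nonneg (x j)).mp hN.symm i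
    simp [hx]
  · set c := Real.sqrt (∑ i, x i ^ 2)
    have hcN : c ^ 2 = ∑ i, x i ^ 2 := Real.sq_sqrt hN.le
    have hunit : ∑ i, (c⁻¹ • x) i ^ 2 = 1 := by
      simp only [Pi.smul_apply, smul_eq_mul, mul_pow, ← mul_sum, inv_pow, hcN]
      exact inv_mul_cancel₀ hN.ne'
    have := lambdaMin_le_dotProduct_mulVec A hunit
    rwa [mulVec_smul, smul_dotProduct, dotProduct_smul, smul_eq_mul, smul_eq_mul, ← mul_assoc,
      ← mul_inv, ← sq, hcN, le_inv_mul_iff₀ hN, mul_comm] at this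

lemma le_lambdaMin (hm : 0 < m) {c : ℝ} (h : ∀ x, c * ∑ i, x i ^ 2 ≤ x ⬝ᵥ A *ᵥ x) :
    c ≤ lambdaMin A := by
  have hsingle : ∑ i, (Pi.single ⟨0, hm⟩ 1 : Fin m → ℝ) i ^ 2 = 1 := by
    simp [Pi.single_apply]
  refine le_csInf ⟨_, _, hsingle, rfl⟩ ?_
  rintro r ⟨x, hx, rfl⟩
  simpa [hx, sum_sum_mul_mul_eq_dotProduct_mulVec] using h x

lemma lambdaMin_le_of_dotProduct_mulVec_le {x : Fin m → ℝ} (hx : x ≠ 0) {c : ℝ}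
    (h : x ⬝ᵥ A *ᵥ x ≤ c * ∑ i, x i ^ 2) : lambdaMin A ≤ c := by
  have hN : 0 < ∑ i, x i ^ 2 := by
    obtain ⟨i, hi⟩ := Function.ne_iff.mp hx
    exact sum_pos' (fun j _ => sq_nonneg (x j)) ⟨i, mem_univ i, sq_pos_of_ne_zero hi⟩
  exact le_of_mul_le_mul_right ((lambdaMin_mul_sum_sq_le A x).trans h) hN

lemma mulVec_eq_lambdaMin_smul (hA : A.IsHermitian) {x : Fin m → ℝ}
    (h : x ⬝ᵥ A *ᵥ x = lambdaMin A * ∑ i, x i ^ 2) : A *ᵥ x = lambdaMin A • x := by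
  have hquad : ∀ y : Fin m → ℝ, star y ⬝ᵥ (A - lambdaMin A • 1) *ᵥ y
      = y ⬝ᵥ A *ᵥ y - lambdaMin A * ∑ i, y i ^ 2 := by
    intro y
    rw [star_trivial, sub_mulVec, dotProduct_sub, smul_mulVec, one_mulVec, dotProduct_smul,
      smul_eq_mul]
    simp only [dotProduct, sq]
  have hpsd : (A - lambdaMin A • 1).PosSemidef := by
    refine .of_dotProduct_mulVec_nonneg (hA.sub (isHermitian_one.smul ?_)) fun y => ?_
    · exact IsSelfAdjoint.all _
    · rw [hquad]; linarith [lambdaMin_mul_sum_sq_le A y]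
  have := (hpsd.dotProduct_mulVec_zero_iff x).mp (by rw [hquad, h, sub_self])
  rwa [sub_mulVec, sub_eq_zero, smul_mulVec, one_mulVec] at this

end Rayleigh

section Design

variable {n t : ℕ} (ξ : Fin (n+1) → Fin t → ℝ)

/-- The matrix `Z(ξ)` of dose weights. -/
def doseMatrix : Matrix (Fin n) (Fin t) ℝ := of fun i k => ξ i.succ k

lemma NA_eq : NA n t ξ =
    diagonal (fun i => repl n t ξ i.succ) - (t : ℝ) • (doseMatrix ξ * (doseMatrix ξ)ᵀ) := by
  ext i j
  simp [NA, diagonal_apply, mul_apply, doseMatrix]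

lemma NA_isHermitian : (NA n t ξ).IsHermitian := by
  ext i j
  simp only [conjTranspose_apply, star_trivial, NA, eq_comm (a := i), mul_comm]
  rcases eq_or_ne j i with rfl | _ <;> simp [*]

lemma dotProduct_NA_mulVec (x : Fin n → ℝ) :
    x ⬝ᵥ NA n t ξ *ᵥ x =
      ∑ i, repl n t ξ i.succ * x i ^ 2 - t * ∑ k, (x ᵥ* doseMatrix ξ) k ^ 2 := by
  rw [NA_eq, sub_mulVec, dotProduct_sub, smul_mulVec, dotProduct_smul,
    ← mulVec_mulVec, mulVec_transpose, dotProduct_mulVec x (doseMatrix ξ), smul_eq_mul]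
  simp only [dotProduct, mulVec_diagonal, sq]
  congr 1
  exact sum_congr rfl fun i _ => by ring

lemma NA_mulVec_one (j : Fin n) :
    (NA n t ξ *ᵥ 1) j = repl n t ξ j.succ - t * (doseMatrix ξ *ᵥ (1 ᵥ* doseMatrix ξ)) j := by
  rw [NA_eq, sub_mulVec, smul_mulVec, ← mulVec_mulVec, mulVec_transpose]
  simp [mulVec_diagonal]

lemma vecMul_doseMatrix_apply (x : Fin n → ℝ) (k : Fin t) :
    (x ᵥ* doseMatrix ξ) k = ∑ i, x i * ξ i.succ k := by
  simp [vecMul, dotProduct, doseMatrix]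

lemma one_dotProduct_NA_mulVec_one (ht : 0 < t) :
    1 ⬝ᵥ NA n t ξ *ᵥ 1 = 1 / 4 - t * ∑ k, ((1 ᵥ* doseMatrix ξ) k - 1 / (2 * t)) ^ 2 := by
  have hrepl : ∑ i : Fin n, repl n t ξ i.succ = ∑ k, (1 ᵥ* doseMatrix ξ) k := by
    simp only [repl, vecMul_doseMatrix_apply, Pi.one_apply, one_mul]
    exact sum_comm
  have hquarter : (1 : ℝ) / 4 = ∑ _k : Fin t, 1 / (4 * (t : ℝ)) := by
    simp only [sum_const, card_univ, Fintype.card_fin, nsmul_eq_mul]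
    field_simp
  rw [dotProduct_NA_mulVec, hquarter]
  simp only [Pi.one_apply, one_pow, mul_one, hrepl, mul_sum, ← sum_sub_distrib]
  exact sum_congr rfl fun k _ => by field_simp; ring

theorem lambdaMin_NA_le (hn : 0 < n) (ht : 0 < t) : lambdaMin (NA n t ξ) ≤ 1 / (4 * n) := by
  have : Nonempty (Fin n) := ⟨⟨0, hn⟩⟩
  refine lambdaMin_le_of_dotProduct_mulVec_le _ one_ne_zero ?_
  have hpos : 0 ≤ (t : ℝ) * ∑ k, ((1 ᵥ* doseMatrix ξ) k - 1 / (2 * t)) ^ 2 := by positivity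
  rw [one_dotProduct_NA_mulVec_one ξ ht]
  simp only [Pi.one_apply, one_pow, sum_const, card_univ, Fintype.card_fin, nsmul_eq_mul, mul_one]
  have hquarter : 1 / (4 * n) * (n : ℝ) = 1 / 4 := by field_simp
  linarith

lemma one_vecMul_doseMatrix_eq_of_lambdaMin_NA_eq (hn : 0 < n) (ht : 0 < t)
    (h : lambdaMin (NA n t ξ) = 1 / (4 * n)) (k : Fin t) :
    (1 ᵥ* doseMatrix ξ) k = 1 / (2 * t) := by
  have ht' : (0 : ℝ) < t := Nat.cast_pos.mpr ht
  have hmin := lambdaMin_mul_sum_sq_le (NA n t ξ) 1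
  simp only [h, one_dotProduct_NA_mulVec_one ξ ht, Pi.one_apply, one_pow, sum_const, card_univ,
    Fintype.card_fin, nsmul_eq_mul, mul_one] at hmin
  have hdev : ∑ k, ((1 ᵥ* doseMatrix ξ) k - 1 / (2 * t)) ^ 2 = 0 := by
    refine le_antisymm ?_ (by positivity)
    have hquarter : 1 / (4 * n) * (n : ℝ) = 1 / 4 := by field_simp
    nlinarith
  have := (sum_eq_zero_iff_of_nonneg fun k _ => sq_nonneg _).mp hdev k (mem_univ k)
  linarith [pow_eq_zero_iff (n := 2) two_ne_zero |>.mp this]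

lemma repl_eq_of_lambdaMin_NA_eq (hn : 0 < n) (ht : 0 < t)
    (h : lambdaMin (NA n t ξ) = 1 / (4 * n)) (j : Fin n) :
    repl n t ξ j.succ = 1 / (2 * n) := by
  have hs := one_vecMul_doseMatrix_eq_of_lambdaMin_NA_eq ξ hn ht h
  have hquad : 1 ⬝ᵥ NA n t ξ *ᵥ 1 = lambdaMin (NA n t ξ) * ∑ i, (1 : Fin n → ℝ) i ^ 2 := by
    simp only [one_dotProduct_NA_mulVec_one ξ ht, hs, sub_self, zero_pow two_ne_zero,
      sum_const_zero, mul_zero, sub_zero, h, Pi.one_apply, one_pow, sum_const, card_univ,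
      Fintype.card_fin, nsmul_eq_mul, mul_one]
    field_simp
  have heig := congrFun (mulVec_eq_lambdaMin_smul _ (NA_isHermitian ξ) hquad) j
  rw [NA_mulVec_one, h, Pi.smul_apply, Pi.one_apply, smul_eq_mul, mul_one] at heig
  have hZ : (doseMatrix ξ *ᵥ (1 ᵥ* doseMatrix ξ)) j = repl n t ξ j.succ / (2 * t) := by
    simp only [mulVec, dotProduct, hs, ← sum_mul, repl]
    simp [doseMatrix, div_eq_mul_inv]
  rw [hZ] at heig
  field_simp at heig ⊢
  linarith

lemma le_lambdaMin_NA (hn : 0 < n) (ht : 0 < t) (hξ : ∀ i k, 0 ≤ ξ i k)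
    (hs : ∀ k, (1 ᵥ* doseMatrix ξ) k = 1 / (2 * t))
    (hr : ∀ i : Fin n, repl n t ξ i.succ = 1 / (2 * n)) :
    1 / (4 * n) ≤ lambdaMin (NA n t ξ) := by
  have ht' : (0 : ℝ) < t := Nat.cast_pos.mpr ht
  refine le_lambdaMin _ hn fun x => ?_
  have hcs : ∀ k, (x ᵥ* doseMatrix ξ) k ^ 2 ≤ 1 / (2 * t) * ∑ i, x i ^ 2 * ξ i.succ k := by
    intro k
    rw [← hs k]
    simp only [vecMul_doseMatrix_apply, Pi.one_apply, one_mul]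
    refine sum_sq_le_sum_mul_sum_of_sq_le_mul _ (fun i _ => hξ _ _)
      (fun i _ => mul_nonneg (sq_nonneg _) (hξ _ _)) fun i _ => le_of_eq (by ring)
  have hsum : ∑ k, (x ᵥ* doseMatrix ξ) k ^ 2 ≤ 1 / (2 * t) * (1 / (2 * n) * ∑ i, x i ^ 2) :=
    calc ∑ k, (x ᵥ* doseMatrix ξ) k ^ 2
        ≤ ∑ k, 1 / (2 * t) * ∑ i, x i ^ 2 * ξ i.succ k := sum_le_sum fun k _ => hcs k
      _ = 1 / (2 * t) * ∑ i, x i ^ 2 * repl n t ξ i.succ := by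
        rw [← mul_sum, sum_comm]
        simp only [repl, mul_sum]
      _ = 1 / (2 * t) * (1 / (2 * n) * ∑ i, x i ^ 2) := by
        simp only [hr, mul_sum, mul_comm]
  rw [dotProduct_NA_mulVec]
  simp only [hr, ← mul_sum] at hsum ⊢
  have := mul_le_mul_of_nonneg_left hsum ht'.le
  field_simp at this ⊢
  linarith

theorem lambdaMin_NA_eq_iff (hn : 0 < n) (ht : 0 < t) (hξ : ∀ i k, 0 ≤ ξ i k) :
    lambdaMin (NA n t ξ) = 1 / (4 * n) ↔
      (∀ k, (1 ᵥ* doseMatrix ξ) k = 1 / (2 * t)) ∧ ∀ i : Fin n, repl n t ξ i.succ = 1 / (2 * n) :=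
  ⟨fun h => ⟨one_vecMul_doseMatrix_eq_of_lambdaMin_NA_eq ξ hn ht h,
      repl_eq_of_lambdaMin_NA_eq ξ hn ht h⟩,
    fun ⟨hs, hr⟩ => le_antisymm (lambdaMin_NA_le ξ hn ht) (le_lambdaMin_NA ξ hn ht hξ hs hr)⟩

lemma placebo_eq_iff_one_vecMul_doseMatrix_eq {k : Fin t} (hk : ∑ i, ξ i k = 1 / t) :
    ξ 0 k = 1 / (2 * t) ↔ (1 ᵥ* doseMatrix ξ) k = 1 / (2 * t) := by
  have hhalf : (1 : ℝ) / t = 1 / (2 * t) + 1 / (2 * t) := by ring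
  rw [Fin.sum_univ_succ] at hk
  simp only [vecMul_doseMatrix_apply, Pi.one_apply, one_mul]
  constructor <;> intro h <;> linarith

end Design

section Extended

variable (n : ℕ)

/-- Placebo takes half of every cohort; cohort `c + 1 ≤ n` gives its other half to dose `c + 1`,
and the last cohort spreads its other half evenly over all doses. -/
def balancedExtendedDesign : Fin (n+1) → Fin (n+1) → ℝ := fun i k =>
  if i = 0 then 1 / (2 * (n + 1)) else
    Fin.lastCases (1 / (2 * n * (n + 1))) (fun c => if i = c.succ then 1 / (2 * (n + 1)) else 0) k

lemma balancedExtendedDesign_nonneg (i k : Fin (n+1)) : 0 ≤ balancedExtendedDesign n i k := by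
  unfold balancedExtendedDesign
  induction k using Fin.lastCases <;> split_ifs <;> simp <;> positivity

variable {n}

lemma one_vecMul_doseMatrix_balancedExtendedDesign (hn : 0 < n) (k : Fin (n+1)) :
    (1 ᵥ* doseMatrix (balancedExtendedDesign n)) k = 1 / (2 * (n + 1 : ℕ)) := by
  simp only [vecMul_doseMatrix_apply, Pi.one_apply, one_mul, balancedExtendedDesign,
    Fin.succ_ne_zero, if_false]
  induction k using Fin.lastCases with
  | last =>
    simp only [Fin.lastCases_last, sum_const, card_univ, Fintype.card_fin, nsmul_eq_mul]
    push_cast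
    field_simp
  | cast c => simp [Fin.succ_inj]

lemma repl_balancedExtendedDesign (hn : 0 < n) (j : Fin n) :
    repl n (n+1) (balancedExtendedDesign n) j.succ = 1 / (2 * n) := by
  simp only [repl, balancedExtendedDesign, Fin.succ_ne_zero, if_false, Fin.sum_univ_castSucc,
    Fin.lastCases_castSucc, Fin.lastCases_last, Fin.succ_inj, sum_ite_eq, mem_univ, if_true]
  field_simp

lemma isEscalation_balancedExtendedDesign (hn : 0 < n) :
    isEscalation n (n+1) (balancedExtendedDesign n) := by
  have hcol : ∀ k, ∑ i, balancedExtendedDesign n i k = 1 / (n + 1 : ℕ) := by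
    intro k
    have hdose := one_vecMul_doseMatrix_balancedExtendedDesign hn k
    simp only [vecMul_doseMatrix_apply, Pi.one_apply, one_mul] at hdose
    rw [Fin.sum_univ_succ, hdose]
    simp only [balancedExtendedDesign, if_true]
    push_cast
    field_simp
    norm_num
  refine ⟨⟨balancedExtendedDesign_nonneg n, ?_⟩, fun i k hk hik => ?_, hcol⟩
  · rw [sum_comm]
    simp only [hcol, sum_const, card_univ, Fintype.card_fin, nsmul_eq_mul]
    push_cast
    field_simp
  · induction k using Fin.lastCases with
    | last => simp at hk
    | cast c =>
      simp only [balancedExtendedDesign, Fin.lastCases_castSucc]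
      rw [if_neg (by rintro rfl; simp at hik), if_neg (by rintro rfl; simp at hik)]

end Extended

/-- Theorem 2 (E-optimality, extended designs, t = n+1): every extended
dose-escalation design has λ_min(N_A(ξ)) ≤ 1/(4n), with equality iff
ξ(0,k) = 1/(2(n+1)) for all cohorts k and r_1(ξ) = … = r_n(ξ) = 1/(2n);
consequently, an extended design is E-optimal iff these conditions hold. -/
theorem stmt3 (n : ℕ) (hn : 2 ≤ n) :
    (∀ ξ : Fin (n+1) → Fin (n+1) → ℝ, isEscalation n (n+1) ξ →
      lambdaMin (NA n (n+1) ξ) ≤ 1 / (4 * n) ∧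
      (lambdaMin (NA n (n+1) ξ) = 1 / (4 * n) ↔
        ((∀ k : Fin (n+1), ξ 0 k = 1 / (2 * (n + 1))) ∧
         (∀ i : Fin n, repl n (n+1) ξ i.succ = 1 / (2 * n))))) ∧
    (∀ ξ : Fin (n+1) → Fin (n+1) → ℝ, isEscalation n (n+1) ξ →
      ((∀ ξ' : Fin (n+1) → Fin (n+1) → ℝ, isEscalation n (n+1) ξ' →
          lambdaMin (NA n (n+1) ξ') ≤ lambdaMin (NA n (n+1) ξ)) ↔
        ((∀ k : Fin (n+1), ξ 0 k = 1 / (2 * (n + 1))) ∧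
         (∀ i : Fin n, repl n (n+1) ξ i.succ = 1 / (2 * n))))) := by
  have hn0 : 0 < n := by omega
  have ht : 0 < n + 1 := n.succ_pos
  have hbound := fun ξ => lambdaMin_NA_le ξ hn0 ht
  have heq_iff : ∀ ξ, isEscalation n (n+1) ξ → (lambdaMin (NA n (n+1) ξ) = 1 / (4 * n) ↔
      (∀ k : Fin (n+1), ξ 0 k = 1 / (2 * (n + 1))) ∧
        ∀ i : Fin n, repl n (n+1) ξ i.succ = 1 / (2 * n)) := by
    rintro ξ ⟨⟨hξ, -⟩, -, hcol⟩
    have hplacebo := fun k => placebo_eq_iff_one_vecMul_doseMatrix_eq ξ (hcol k)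
    rw [lambdaMin_NA_eq_iff ξ hn0 ht hξ]
    simp only [Nat.cast_succ] at hplacebo ⊢
    simp only [hplacebo]
  have hbalanced : lambdaMin (NA n (n+1) (balancedExtendedDesign n)) = 1 / (4 * n) :=
    (lambdaMin_NA_eq_iff _ hn0 ht (balancedExtendedDesign_nonneg n)).mpr
      ⟨one_vecMul_doseMatrix_balancedExtendedDesign hn0, repl_balancedExtendedDesign hn0⟩
  refine ⟨fun ξ hξ => ⟨hbound ξ, heq_iff ξ hξ⟩, fun ξ hξ => ⟨fun hopt => ?_, fun h ξ' _ => ?_⟩⟩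
  · refine (heq_iff ξ hξ).mp (le_antisymm (hbound ξ) ?_)
    exact hbalanced ▸ hopt _ (isEscalation_balancedExtendedDesign hn0)
  · exact ((heq_iff ξ hξ).mpr h).symm ▸ hbound ξ'
end
end

section
/- The Senn design is LV-optimal among standard dose-escalation designs: for every standard dose-escalation design ξ (t = n), every stage k ∈ {1,…,n}, and every vector u with M^{(k)}(ξ) u = c_k, one has c_k^T u ≥ 4n; moreover, for the Senn design ξ_S and every k ∈ {1,…,n} there exists u with M^{(k)}(ξ_S) u = c_k and c_k^T u = 4n. In other words, after each cohort k the Senn design minimizes the variance of the least-squares estimator of τ_k − τ_0 computed from the first k cohorts, simultaneously for all k. -/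
/-!
If `M u = c` with `M` positive semidefinite, Cauchy–Schwarz for the form of `M` gives
`(cᵀv)² ≤ (cᵀu)(vᵀMv)` for every `v`. At stage `k` take `v` with `τᵢ = -1` for `i < k`,
`τᵢ = 1` for `i ≥ k`, `μ = 0` and `θⱼ = 1` for the cohorts `j < k`. In such a cohort an
escalation design only runs doses `i ≤ j`, where `f(i,j)ᵀv = 0`, while `f(i,k)ᵀv = ±1`; so
`vᵀM⁽ᵏ⁾v` is the weight `1/t` of cohort `k`, and together with `c_kᵀv = 2` this gives
`c_kᵀu ≥ 4t`. For the Senn design `M⁽ᵏ⁾v = c_k/(2n)`, so `u = 2n v` attains the bound.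
-/

noncomputable section

open Matrix Finset

/-- Index of the parameter vector β = (τ₀,…,τₙ, μ, θ₁,…,θ_t) ∈ ℝ^{n+t+2}. -/
abbrev PIdx (n t : ℕ) := Fin (n+1) ⊕ (Unit ⊕ Fin t)

/-- The regression vector f(i,k) = (e_{i+1}^T, 1, e_k^T)^T. -/
def fvec (n t : ℕ) (i : Fin (n+1)) (k : Fin t) : PIdx n t → ℝ :=
  fun j => match j with
  | Sum.inl a => if a = i then 1 else 0
  | Sum.inr (Sum.inl _) => 1
  | Sum.inr (Sum.inr b) => if b = k then 1 else 0

/-- The moment matrix M(ξ) = ∑_{i,k} ξ(i,k) f(i,k) f(i,k)^T. -/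
def momM (n t : ℕ) (ξ : Fin (n+1) → Fin t → ℝ) : Matrix (PIdx n t) (PIdx n t) ℝ :=
  ∑ i, ∑ k, ξ i k • Matrix.vecMulVec (fvec n t i k) (fvec n t i k)

/-- The stage-k moment matrix M^{(k)}(ξ): only trials in the first k cohorts
(cohorts with cohort number ≤ k) are kept. -/
def momMstage (n t : ℕ) (ξ : Fin (n+1) → Fin t → ℝ) (k : ℕ) :
    Matrix (PIdx n t) (PIdx n t) ℝ :=
  ∑ i, ∑ j ∈ Finset.univ.filter (fun j : Fin t => j.val < k),
    ξ i j • Matrix.vecMulVec (fvec n t i j) (fvec n t i j)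

/-- The vector c_k, with −1 in the coordinate of τ₀, +1 in the coordinate of
τ_k, and 0 elsewhere (so c_k^T β = τ_k − τ₀). -/
def cvec (n t k : ℕ) : PIdx n t → ℝ :=
  fun j => match j with
  | Sum.inl a => if a.val = 0 then -1 else if a.val = k then 1 else 0
  | Sum.inr _ => 0

theorem Matrix.PosSemidef.sq_dotProduct_div_le {ι : Type*} [Fintype ι] {M : Matrix ι ι ℝ}
    (hM : M.PosSemidef) {u c : ι → ℝ} (hu : M *ᵥ u = c) {v : ι → ℝ}
    (hv : 0 < v ⬝ᵥ M *ᵥ v) :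
    (c ⬝ᵥ v) ^ 2 / (v ⬝ᵥ M *ᵥ v) ≤ c ⬝ᵥ u := by
  have hsymm : u ⬝ᵥ M *ᵥ v = c ⬝ᵥ v := by
    rw [dotProduct_mulVec, ← mulVec_transpose, ← conjTranspose_eq_transpose_of_trivial,
      hM.isHermitian.eq, hu]
  have key := hM.dotProduct_mulVec_nonneg (u - ((c ⬝ᵥ v) / (v ⬝ᵥ M *ᵥ v)) • v)
  simp only [star_trivial, mulVec_sub, mulVec_smul, sub_dotProduct, dotProduct_sub,
    smul_dotProduct, dotProduct_smul, hu, hsymm, smul_eq_mul, dotProduct_comm v c,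
    dotProduct_comm u c] at key
  generalize c ⬝ᵥ v = b at key ⊢
  generalize v ⬝ᵥ M *ᵥ v = q at key hv ⊢
  have : b / q * b + b / q * (b - b / q * q) = b ^ 2 / q := by field_simp; ring
  linarith

-- Cohorts are 0-indexed, so stage `k` ends with the cohort `m : Fin t` where `k = m + 1`.
def stageContrast (n t k : ℕ) : PIdx n t → ℝ
  | Sum.inl a => if a.val < k then -1 else 1
  | Sum.inr (Sum.inl _) => 0
  | Sum.inr (Sum.inr j) => if j.val + 1 < k then 1 else 0

section MomentMatrix

variable {n t : ℕ}

theorem momMstage_posSemidef {ξ : Fin (n+1) → Fin t → ℝ} (hξ : ∀ i j, 0 ≤ ξ i j) (k : ℕ) :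
    (momMstage n t ξ k).PosSemidef :=
  posSemidef_sum _ fun i _ => posSemidef_sum _ fun j _ =>
    (posSemidef_vecMulVec_self_star (fvec n t i j)).smul (hξ i j)

lemma momMstage_mulVec (ξ : Fin (n+1) → Fin t → ℝ) (k : ℕ) (x : PIdx n t → ℝ) :
    momMstage n t ξ k *ᵥ x = ∑ i, ∑ j ∈ univ.filter (fun j : Fin t => j.val < k),
      (ξ i j * (fvec n t i j ⬝ᵥ x)) • fvec n t i j := by
  simp only [momMstage, sum_mulVec, smul_mulVec, vecMulVec_mulVec, op_smul_eq_smul, smul_smul]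

lemma fvec_dotProduct (i : Fin (n+1)) (j : Fin t) (x : PIdx n t → ℝ) :
    fvec n t i j ⬝ᵥ x = x (Sum.inl i) + x (Sum.inr (Sum.inl ())) + x (Sum.inr (Sum.inr j)) := by
  simp only [dotProduct, fvec, Fintype.sum_sum_type, ite_mul, one_mul, zero_mul, sum_ite_eq',
    mem_univ, if_true, univ_unique, PUnit.default_eq_unit, sum_singleton]
  ring

lemma fvec_sub_fvec_zero (a : Fin (n+1)) (ha : a ≠ 0) (j : Fin t) :
    fvec n t a j - fvec n t 0 j = cvec n t a := by
  funext p
  rcases p with b | _ | _ <;> simp only [fvec, cvec, Pi.sub_apply, sub_self]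
  by_cases hb : b = 0
  · simp [hb, Ne.symm ha]
  · simp [hb, Fin.val_eq_zero_iff, Fin.ext_iff]

lemma cvec_dotProduct {k : ℕ} (hk : k < n + 1) (hk1 : 1 ≤ k) (x : PIdx n t → ℝ) :
    cvec n t k ⬝ᵥ x = x (Sum.inl ⟨k, hk⟩) - x (Sum.inl 0) := by
  have hcoord : ∀ a : Fin (n+1), cvec n t k (Sum.inl a)
      = (if a = ⟨k, hk⟩ then 1 else 0) - (if a = 0 then 1 else 0) := by
    intro a
    simp only [cvec, Fin.ext_iff, Fin.val_zero]
    split_ifs <;> first | omega | norm_num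
  simp only [dotProduct, Fintype.sum_sum_type, hcoord, sub_mul, ite_mul, one_mul, zero_mul,
    sum_sub_distrib, sum_ite_eq', mem_univ, if_true]
  simp [cvec]

lemma fvec_dotProduct_stageContrast (k : ℕ) (i : Fin (n+1)) (j : Fin t) :
    fvec n t i j ⬝ᵥ stageContrast n t k
      = (if i.val < k then -1 else 1) + (if j.val + 1 < k then 1 else 0) := by
  simp [fvec_dotProduct, stageContrast]

lemma cvec_dotProduct_stageContrast {k : ℕ} (hk1 : 1 ≤ k) (hkn : k ≤ n) :
    cvec n t k ⬝ᵥ stageContrast n t k = 2 := by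
  rw [cvec_dotProduct (by omega) hk1]
  norm_num [stageContrast, show 0 < k by omega]

lemma momMstage_mulVec_stageContrast {ξ : Fin (n+1) → Fin t → ℝ} (m : Fin t)
    (hξ : ∀ i j, j < m → j.val + 1 < i.val → ξ i j = 0) :
    momMstage n t ξ (m + 1) *ᵥ stageContrast n t (m + 1)
      = ∑ i, (ξ i m * if i.val ≤ m.val then -1 else 1) • fvec n t i m := by
  rw [momMstage_mulVec]
  refine sum_congr rfl fun i _ => ?_
  rw [sum_eq_single_of_mem m (by simp)]
  · simp [fvec_dotProduct_stageContrast]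
  · intro j hj hjm
    have hjm : j.val < m.val := by
      have := Fin.val_ne_of_ne hjm
      simp only [mem_filter, mem_univ, true_and] at hj
      omega
    by_cases hij : i.val ≤ j.val + 1
    · simp [fvec_dotProduct_stageContrast, show i.val < m.val + 1 by omega, hjm]
    · simp [hξ i j hjm (by omega)]

lemma stageContrast_dotProduct_momMstage_mulVec {ξ : Fin (n+1) → Fin t → ℝ} (m : Fin t)
    (hξ : ∀ i j, j < m → j.val + 1 < i.val → ξ i j = 0) :
    stageContrast n t (m + 1) ⬝ᵥ momMstage n t ξ (m + 1) *ᵥ stageContrast n t (m + 1)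
      = ∑ i, ξ i m := by
  rw [momMstage_mulVec_stageContrast m hξ, dotProduct_sum]
  refine sum_congr rfl fun i _ => ?_
  rw [dotProduct_smul, dotProduct_comm, fvec_dotProduct_stageContrast]
  simp only [lt_irrefl, if_false, add_zero, Nat.lt_succ_iff, smul_eq_mul]
  split_ifs <;> ring

theorem four_mul_le_cvec_dotProduct_of_isEscalation {ξ : Fin (n+1) → Fin t → ℝ}
    (hξ : isEscalation n t ξ) (m : Fin t) (hm : m.val < n) {u : PIdx n t → ℝ}
    (hu : momMstage n t ξ (m + 1) *ᵥ u = cvec n t (m + 1)) :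
    4 * (t : ℝ) ≤ cvec n t (m + 1) ⬝ᵥ u := by
  obtain ⟨⟨hpos, -⟩, hsupp, hcohort⟩ := hξ
  have hq : stageContrast n t (m + 1) ⬝ᵥ momMstage n t ξ (m + 1) *ᵥ stageContrast n t (m + 1)
      = 1 / t := by
    rw [stageContrast_dotProduct_momMstage_mulVec m fun i j hj => hsupp i j (by omega),
      hcohort m]
  have ht : (0 : ℝ) < t := Nat.cast_pos.mpr m.pos
  have := (momMstage_posSemidef hpos _).sq_dotProduct_div_le hu (by rw [hq]; positivity)
  rw [hq, cvec_dotProduct_stageContrast (by omega) (by omega)] at this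
  calc 4 * (t : ℝ) = 2 ^ 2 / (1 / t) := by field_simp; norm_num
    _ ≤ _ := this

end MomentMatrix

lemma senn_eq_zero {n : ℕ} {i : Fin (n+1)} {j : Fin n} (h0 : i.val ≠ 0)
    (hj : i.val ≠ j.val + 1) : senn n i j = 0 :=
  if_neg (by omega)

lemma momMstage_senn_mulVec_stageContrast {n : ℕ} (m : Fin n) :
    momMstage n n (senn n) (m + 1) *ᵥ stageContrast n n (m + 1)
      = (1 / (2 * n : ℝ)) • cvec n n (m + 1) := by
  rw [momMstage_mulVec_stageContrast m fun _ _ _ h => senn_eq_zero (by omega) (by omega)]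
  have hK : (⟨m + 1, by omega⟩ : Fin (n+1)) ≠ 0 := by simp [Fin.ext_iff]
  rw [Fintype.sum_eq_add 0 _ hK.symm fun i hi => ?_, ← fvec_sub_fvec_zero _ hK m]
  · have hsenn : ∀ i : Fin (n+1), (i.val = 0 ∨ i.val = m.val + 1) → senn n i m = 1 / (2 * n) :=
      fun _ h => if_pos h
    rw [hsenn 0 (Or.inl rfl), hsenn _ (Or.inr rfl), Fin.val_zero, if_pos (Nat.zero_le _),
      if_neg (Nat.not_succ_le_self _)]
    module
  · simp only [Ne, Fin.ext_iff, Fin.val_zero] at hi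
    simp [senn_eq_zero hi.1 hi.2]

theorem stmt11_general (n : ℕ) :
    (∀ ξ : Fin (n+1) → Fin n → ℝ, isEscalation n n ξ →
      ∀ k : ℕ, 1 ≤ k → k ≤ n →
        ∀ u : PIdx n n → ℝ, (momMstage n n ξ k).mulVec u = cvec n n k →
          4 * (n : ℝ) ≤ cvec n n k ⬝ᵥ u) ∧
    (∀ k : ℕ, 1 ≤ k → k ≤ n →
      ∃ u : PIdx n n → ℝ, (momMstage n n (senn n) k).mulVec u = cvec n n k ∧
        cvec n n k ⬝ᵥ u = 4 * (n : ℝ)) := by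
  have last_cohort : ∀ k, 1 ≤ k → k ≤ n → ∃ m : Fin n, k = m.val + 1 :=
    fun k hk1 hkn => ⟨⟨k - 1, by omega⟩, by simp only; omega⟩
  refine ⟨fun ξ hξ k hk1 hkn u hu => ?_, fun k hk1 hkn => ?_⟩
  · obtain ⟨m, rfl⟩ := last_cohort k hk1 hkn
    exact four_mul_le_cvec_dotProduct_of_isEscalation hξ m m.isLt hu
  · obtain ⟨m, rfl⟩ := last_cohort k hk1 hkn
    have hn : (0 : ℝ) < n := Nat.cast_pos.mpr m.pos
    refine ⟨(2 * n : ℝ) • stageContrast n n (m + 1), ?_, ?_⟩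
    · rw [mulVec_smul, momMstage_senn_mulVec_stageContrast, smul_smul,
        mul_one_div_cancel (mul_pos two_pos hn).ne', one_smul]
    · rw [dotProduct_smul, cvec_dotProduct_stageContrast (by omega) m.isLt, smul_eq_mul]
      ring

/-- Theorem 3 (LV-optimality of the Senn design, t = n): for every standard
dose-escalation design ξ, every stage k ∈ {1,…,n} and every u with
M^{(k)}(ξ)u = c_k one has c_k^T u ≥ 4n, and for the Senn design the value 4n
is attained at every stage; i.e., the Senn design simultaneously minimizes
the variance of the least-squares estimator of τ_k − τ₀ computed from the
first k cohorts, for all k. -/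
theorem stmt11 (n : ℕ) (hn : 2 ≤ n) :
    (∀ ξ : Fin (n+1) → Fin n → ℝ, isEscalation n n ξ →
      ∀ k : ℕ, 1 ≤ k → k ≤ n →
        ∀ u : PIdx n n → ℝ, (momMstage n n ξ k).mulVec u = cvec n n k →
          4 * (n : ℝ) ≤ cvec n n k ⬝ᵥ u) ∧
    (∀ k : ℕ, 1 ≤ k → k ≤ n →
      ∃ u : PIdx n n → ℝ, (momMstage n n (senn n) k).mulVec u = cvec n n k ∧
        cvec n n k ⬝ᵥ u = 4 * (n : ℝ)) :=
  stmt11_general n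
end
end
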